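/- arXiv:2007.13195 — 3 statements merged into one kernel-verified Lean document; each statement's English description precedes it below -/
import Mathlib

section
/- Let t ≥ 0, h > 0, and G_{t,h}(θ) = min(h, max(θ − t, 0)). Define F(u,v) = u² + v² − (u − v)(G_{t,h}(u) − G_{t,h}(v)) for u, v > 0. Then F(u,v) ≥ 0 for all u, v > 0, and whenever u₂ ≥ u₁ > 0 and v₂ ≥ v₁ > 0 one has F(u₂,v₂) + F(u₁,v₁) ≥ F(u₂,v₁) + F(u₁,v₂). -/
/-- The truncation `G_{t,h}(θ) = min(h, max(θ − t, 0))`. -/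
noncomputable def truncG (t h θ : ℝ) : ℝ := min h (max (θ - t) 0)

/-- `F(u,v) = u² + v² − (u − v)(G_{t,h}(u) − G_{t,h}(v))`. -/
noncomputable def rieszF (t h u v : ℝ) : ℝ :=
  u ^ 2 + v ^ 2 - (u - v) * (truncG t h u - truncG t h v)

lemma truncG_mono (t h : ℝ) {u v : ℝ} (huv : v ≤ u) :
    truncG t h v ≤ truncG t h u := by
  unfold truncG
  simp only [min_def, max_def]
  split_ifs <;> linarith

lemma truncG_lip (t h : ℝ) {u v : ℝ} (huv : v ≤ u) :
    truncG t h u - truncG t h v ≤ u - v := by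
  unfold truncG
  simp only [min_def, max_def]
  split_ifs <;> linarith

theorem rieszF_nonneg_and_supermodular (t h : ℝ) (ht : 0 ≤ t) (hh : 0 < h) :
    (∀ u v : ℝ, 0 < u → 0 < v → 0 ≤ rieszF t h u v) ∧
    (∀ u₁ u₂ v₁ v₂ : ℝ, 0 < u₁ → u₁ ≤ u₂ → 0 < v₁ → v₁ ≤ v₂ →
      rieszF t h u₂ v₁ + rieszF t h u₁ v₂ ≤ rieszF t h u₂ v₂ + rieszF t h u₁ v₁) := by
  constructor
  · intro u v hu hv
    unfold rieszF
    rcases le_total u v with hle | hle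
    · have h1 := truncG_mono t h hle
      have h2 := truncG_lip t h hle
      nlinarith [mul_pos hu hv]
    · have h1 := truncG_mono t h hle
      have h2 := truncG_lip t h hle
      nlinarith [mul_pos hu hv]
  · intro u₁ u₂ v₁ v₂ hu₁ hu hv₁ hv
    have h1 := truncG_mono t h hu
    have h2 := truncG_mono t h hv
    unfold rieszF
    nlinarith [mul_nonneg (sub_nonneg.2 hv) (sub_nonneg.2 h1),
      mul_nonneg (sub_nonneg.2 hu) (sub_nonneg.2 h2)]
end

section
/- For every s ∈ (0,1), the quantity ℓ(s) := 2/(2^{2s}Γ(s+1)²) − 1/Γ(2s+1) is strictly positive. -/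
open MeasureTheory intervalIntegral Set Real

private lemma ell_ptwise (u : ℝ) {x : ℝ} (hx : x ∈ Set.Icc (0:ℝ) 1) :
    ((x ^ (u - 1) * (1 - x) ^ (-(1/2) : ℝ) : ℝ) : ℂ) =
      (x : ℂ) ^ ((u : ℂ) - 1) * (1 - (x : ℂ)) ^ ((1/2 : ℂ) - 1) := by
  have h1x : (0:ℝ) ≤ 1 - x := by linarith [hx.2]
  rw [Complex.ofReal_mul, Complex.ofReal_cpow hx.1, Complex.ofReal_cpow h1x]
  push_cast
  norm_num

private lemma ell_intble (u : ℝ) (hu : 0 < u) :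
    IntervalIntegrable (fun x : ℝ => x ^ (u - 1) * (1 - x) ^ (-(1/2) : ℝ)) volume 0 1 := by
  have hc := Complex.betaIntegral_convergent (u := (u : ℂ)) (v := (1/2 : ℂ))
    (by simpa using hu) (by norm_num)
  rw [intervalIntegrable_iff_integrableOn_Ioc_of_le zero_le_one] at hc ⊢
  refine IntegrableOn.congr_fun hc.re (fun x hx => ?_) measurableSet_Ioc
  rw [← ell_ptwise u ⟨hx.1.le, hx.2⟩]; exact RCLike.ofReal_re _

private lemma ell_beta (u : ℝ) (hu : 0 < u) :
    Real.Gamma u * Real.Gamma (1/2) =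
      Real.Gamma (u + 1/2) * ∫ x in (0:ℝ)..1, x ^ (u - 1) * (1 - x) ^ (-(1/2) : ℝ) := by
  have h := Complex.Gamma_mul_Gamma_eq_betaIntegral (s := (u : ℂ)) (t := (1/2 : ℂ))
    (by simpa using hu) (by norm_num)
  have hbeta : Complex.betaIntegral (u : ℂ) (1/2 : ℂ) =
      ((∫ x in (0:ℝ)..1, x ^ (u - 1) * (1 - x) ^ (-(1/2) : ℝ) : ℝ) : ℂ) := by
    rw [Complex.betaIntegral, ← intervalIntegral.integral_ofReal]
    refine intervalIntegral.integral_congr fun x hx => ?_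
    rw [Set.uIcc_of_le zero_le_one] at hx
    exact (ell_ptwise u hx).symm
  rw [hbeta] at h
  have e1 : ((u : ℂ) + 1/2) = ((u + 1/2 : ℝ) : ℂ) := by push_cast; ring
  have e2 : ((1/2 : ℂ)) = ((1/2 : ℝ) : ℂ) := by norm_num
  rw [e1, e2, Complex.Gamma_ofReal, Complex.Gamma_ofReal, Complex.Gamma_ofReal] at h
  exact_mod_cast h

private lemma ell_I_gt (s : ℝ) (hs : s ∈ Set.Ioo (0:ℝ) 1) :
    (π / 2 : ℝ) < ∫ x in (0:ℝ)..1, x ^ (s + 1/2 - 1) * (1 - x) ^ (-(1/2) : ℝ) := by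
  have hI32 : (∫ x in (0:ℝ)..1, x ^ ((3/2 : ℝ) - 1) * (1 - x) ^ (-(1/2) : ℝ)) = π / 2 := by
    have h := ell_beta (3/2) (by norm_num)
    have h32 : Real.Gamma (3/2 : ℝ) = (1/2) * Real.Gamma (1/2) := by
      rw [show (3/2 : ℝ) = 1/2 + 1 by norm_num, Real.Gamma_add_one (by norm_num)]
    have h2 : Real.Gamma ((3/2 : ℝ) + 1/2) = 1 := by
      rw [show (3/2 : ℝ) + 1/2 = 1 + 1 by norm_num, Real.Gamma_add_one one_ne_zero,
        Real.Gamma_one, mul_one]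
    rw [h32, h2, Real.Gamma_one_half_eq, one_mul] at h
    rw [← h]
    linear_combination (1/2 : ℝ) * Real.mul_self_sqrt Real.pi_pos.le
  rw [← hI32]
  refine intervalIntegral.integral_lt_integral_of_ae_le_of_measure_setOf_lt_ne_zero zero_le_one
    (ell_intble (3/2) (by norm_num)) (ell_intble (s + 1/2) (by linarith [hs.1])) ?_ ?_
  · filter_upwards [ae_restrict_mem measurableSet_Ioc] with x hx
    have hx0 : 0 < x := hx.1
    have h1x : (0:ℝ) ≤ 1 - x := by linarith [hx.2]
    exact mul_le_mul_of_nonneg_right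
      (Real.rpow_le_rpow_of_exponent_ge hx0 hx.2 (by linarith [hs.2]))
      (Real.rpow_nonneg h1x _)
  · intro h
    have hmeas := Measure.restrict_apply' (μ := volume)
      (s := Set.Ioc (0:ℝ) 1) measurableSet_Ioc
      (t := {x : ℝ | x ^ ((3/2 : ℝ) - 1) * (1 - x) ^ (-(1/2) : ℝ) <
        x ^ (s + 1/2 - 1) * (1 - x) ^ (-(1/2) : ℝ)})
    rw [hmeas] at h
    have hsub : Set.Ioo (0:ℝ) 1 ⊆
        {x : ℝ | x ^ ((3/2 : ℝ) - 1) * (1 - x) ^ (-(1/2) : ℝ) <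
          x ^ (s + 1/2 - 1) * (1 - x) ^ (-(1/2) : ℝ)} ∩ Set.Ioc 0 1 := by
      intro x hx
      refine ⟨?_, hx.1, hx.2.le⟩
      have h1x : (0:ℝ) < 1 - x := by linarith [hx.2]
      exact mul_lt_mul_of_pos_right
        (Real.rpow_lt_rpow_of_exponent_gt hx.1 hx.2 (by linarith [hs.2]))
        (Real.rpow_pos_of_pos h1x _)
    have := measure_mono (μ := (volume : Measure ℝ)) hsub
    rw [h, Real.volume_Ioo] at this
    simp at this

theorem ell_pos (s : ℝ) (hs : s ∈ Set.Ioo (0:ℝ) 1) :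
    0 < 2 / ((2:ℝ) ^ (2 * s) * Real.Gamma (s + 1) ^ 2) - 1 / Real.Gamma (2 * s + 1) := by
  obtain ⟨hs0, hs1⟩ := hs
  set G1 := Real.Gamma (s + 1) with hG1def
  set Gh := Real.Gamma (s + 1/2) with hGhdef
  set G2 := Real.Gamma (2 * s + 1) with hG2def
  set p := (2:ℝ) ^ (2 * s) with hpdef
  have hG1pos : 0 < G1 := Real.Gamma_pos_of_pos (by linarith)
  have hGhpos : 0 < Gh := Real.Gamma_pos_of_pos (by linarith)
  have hG2pos : 0 < G2 := Real.Gamma_pos_of_pos (by linarith)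
  have hppos : 0 < p := Real.rpow_pos_of_pos two_pos _
  have hrpos : 0 < Real.sqrt π := Real.sqrt_pos.mpr Real.pi_pos
  have hr2 : Real.sqrt π * Real.sqrt π = π := Real.mul_self_sqrt Real.pi_pos.le
  -- duplication formula consequence
  have h1 : p * (G1 * Gh) = G2 * Real.sqrt π := by
    have hd := Real.Gamma_mul_Gamma_add_half s
    have hA : G1 = s * Real.Gamma s := Real.Gamma_add_one hs0.ne'
    have hB : G2 = (2 * s) * Real.Gamma (2 * s) := Real.Gamma_add_one (by positivity)
    have hp2 : (2:ℝ) ^ (2 * s) * (2:ℝ) ^ (1 - 2 * s) = 2 := by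
      rw [← Real.rpow_add two_pos]; norm_num
    rw [hA, hB, hpdef]
    linear_combination (2:ℝ) ^ (2 * s) * s * hd +
      s * Real.Gamma (2 * s) * Real.sqrt π * hp2
  -- Beta function consequence
  have h2 : Gh * Real.sqrt π = G1 *
      ∫ x in (0:ℝ)..1, x ^ (s + 1/2 - 1) * (1 - x) ^ (-(1/2) : ℝ) := by
    have hb := ell_beta (s + 1/2) (by linarith)
    rw [Real.Gamma_one_half_eq] at hb
    rw [hb, show s + 1/2 + 1/2 = s + 1 by ring]
  set I := ∫ x in (0:ℝ)..1, x ^ (s + 1/2 - 1) * (1 - x) ^ (-(1/2) : ℝ) with hIdef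
  have hI : π / 2 < I := ell_I_gt s ⟨hs0, hs1⟩
  -- combine
  have step1 : G1 * Real.sqrt π < 2 * Gh := by
    have h3 : (G1 * Real.sqrt π) * Real.sqrt π < (2 * Gh) * Real.sqrt π := by
      nlinarith [mul_lt_mul_of_pos_left hI hG1pos]
    exact lt_of_mul_lt_mul_right h3 hrpos.le
  have key : p * G1 ^ 2 < 2 * G2 := by
    have h4 : (p * G1 ^ 2) * Real.sqrt π < (2 * G2) * Real.sqrt π := by
      nlinarith [mul_lt_mul_of_pos_left step1 (mul_pos hppos hG1pos)]
    exact lt_of_mul_lt_mul_right h4 hrpos.le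
  rw [sub_pos, div_lt_div_iff₀ hG2pos (by positivity)]
  linarith
end

section
/- Let N = 1, s = 1/2, Ω = (−1,1), and define u₁(x) = (1/π)(√(1−x²) − x² log|x| + x² log(1 + √(1−x²))) for |x| < 1 and v₁(x) = √(1−x²) − u₁(x). Then lim_{x→1⁻} u₁(x)/√(1−x²) = 2/π and lim_{x→1⁻} v₁(x)/√(1−x²) = (π−2)/π; in particular 2/π > (π−2)/π, so u₁(x) > v₁(x) for x in some left neighborhood of 1. -/
open Real Filter

/-- The explicit solution of `(−Δ)^{1/2} u = |x|` on `(−1,1)`. -/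
noncomputable def uOne (x : ℝ) : ℝ :=
  (1 / π) * (Real.sqrt (1 - x ^ 2) - x ^ 2 * Real.log |x| +
    x ^ 2 * Real.log (1 + Real.sqrt (1 - x ^ 2)))

/-- The solution of the symmetrized problem `(−Δ)^{1/2} v = 1 − |x|` on `(−1,1)`. -/
noncomputable def vOne (x : ℝ) : ℝ := Real.sqrt (1 - x ^ 2) - uOne x

/-!
Write `s = √(1 - x²)`. Since `s² = (1 - x)(1 + x)`, for `0 < x < 1`
`u₁(x) / s = (1 + x² (log(1 + s) / s + (log x / (x - 1)) · s / (1 + x))) / π`.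
Both difference quotients of `log` at `1` tend to `log' 1 = 1` and `s → 0⁺` as `x → 1⁻`,
so `u₁ / s → 2 / π`, and `v₁ / s = 1 - u₁ / s → (π - 2) / π`.
Since `π < 4` the first limit is larger, hence `u₁ > v₁` near `1`.
-/

open Set Topology

lemma tendsto_slope_log_one : Tendsto (slope log 1) (𝓝[≠] 1) (𝓝 1) := by
  simpa using (hasDerivAt_log one_ne_zero).tendsto_slope

lemma eventually_mem_Ioo_zero_one_nhdsLT_one : ∀ᶠ x in 𝓝[<] (1 : ℝ), x ∈ Ioo 0 1 :=
  Ioo_mem_nhdsLT one_pos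

lemma sqrt_one_sub_sq_pos {x : ℝ} (hx : x ∈ Ioo 0 1) : 0 < √(1 - x ^ 2) :=
  sqrt_pos.2 (by nlinarith [hx.1, hx.2])

lemma tendsto_sqrt_one_sub_sq_nhdsLT_one :
    Tendsto (fun x : ℝ => √(1 - x ^ 2)) (𝓝[<] 1) (𝓝[>] 0) := by
  refine tendsto_nhdsWithin_iff.2 ⟨?_, ?_⟩
  · have hcont : ContinuousAt (fun x : ℝ => √(1 - x ^ 2)) 1 := by fun_prop
    simpa using hcont.tendsto.mono_left nhdsWithin_le_nhds
  · filter_upwards [eventually_mem_Ioo_zero_one_nhdsLT_one] with x hx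
    exact sqrt_one_sub_sq_pos hx

lemma uOne_div_sqrt_eq {x : ℝ} (hx : x ∈ Ioo 0 1) :
    uOne x / √(1 - x ^ 2) = 1 / π * (1 + x ^ 2 * (slope log 1 (1 + √(1 - x ^ 2)) +
      slope log 1 x * (√(1 - x ^ 2) / (1 + x)))) := by
  have hs := sqrt_one_sub_sq_pos hx
  have hsq : √(1 - x ^ 2) ^ 2 = 1 - x ^ 2 := sq_sqrt (by nlinarith [hx.1, hx.2])
  have hx1 : x - 1 ≠ 0 := sub_ne_zero.2 hx.2.ne
  have hx1' : 1 + x ≠ 0 := by linarith [hx.1]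
  rw [uOne, slope_def_field, slope_def_field, log_one, abs_of_pos hx.1, add_sub_cancel_left]
  field_simp
  linear_combination (-x ^ 2 * log x) * hsq

theorem tendsto_uOne_div_sqrt :
    Tendsto (fun x => uOne x / √(1 - x ^ 2)) (𝓝[<] 1) (𝓝 (2 / π)) := by
  have hs := tendsto_sqrt_one_sub_sq_nhdsLT_one
  have hlog_one_add : Tendsto (fun x => slope log 1 (1 + √(1 - x ^ 2))) (𝓝[<] 1) (𝓝 1) := by
    refine tendsto_slope_log_one.comp (tendsto_nhdsWithin_iff.2 ⟨?_, ?_⟩)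
    · simpa using (tendsto_nhdsWithin_iff.1 hs).1.const_add 1
    · filter_upwards [(tendsto_nhdsWithin_iff.1 hs).2] with x hx
      exact (lt_add_of_pos_right 1 hx).ne'
  have hlog : Tendsto (slope log 1) (𝓝[<] 1) (𝓝 1) :=
    tendsto_slope_log_one.mono_left (nhdsLT_le_nhdsNE 1)
  have hquot : Tendsto (fun x => √(1 - x ^ 2) / (1 + x)) (𝓝[<] 1) (𝓝 0) := by
    have hden : Tendsto (fun x : ℝ => 1 + x) (𝓝[<] 1) (𝓝 (1 + 1)) :=
      tendsto_nhdsWithin_of_tendsto_nhds ((continuous_const.add continuous_id).tendsto 1)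
    have hlim := (tendsto_nhdsWithin_iff.1 hs).1.div hden (by norm_num)
    rwa [zero_div] at hlim
  have hsq : Tendsto (fun x : ℝ => x ^ 2) (𝓝[<] 1) (𝓝 (1 ^ 2)) :=
    tendsto_nhdsWithin_of_tendsto_nhds ((continuous_pow 2).tendsto 1)
  have hlim := (hsq.mul (hlog_one_add.add (hlog.mul hquot))).const_add 1 |>.const_mul (1 / π)
  refine (tendsto_congr' ?_).2 (by convert hlim using 2; ring)
  filter_upwards [eventually_mem_Ioo_zero_one_nhdsLT_one] with x hx
  exact uOne_div_sqrt_eq hx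

theorem tendsto_vOne_div_sqrt :
    Tendsto (fun x => vOne x / √(1 - x ^ 2)) (𝓝[<] 1) (𝓝 ((π - 2) / π)) := by
  have hlim := tendsto_uOne_div_sqrt.const_sub 1
  refine (tendsto_congr' ?_).2 (by convert hlim using 2; field_simp)
  filter_upwards [eventually_mem_Ioo_zero_one_nhdsLT_one] with x hx
  rw [vOne, sub_div, div_self (sqrt_one_sub_sq_pos hx).ne']

lemma Filter.Tendsto.eventually_lt_of_div {α : Type*} {l : Filter α} {f g h : α → ℝ}
    {a b : ℝ}
    (hf : Tendsto (fun x => f x / h x) l (𝓝 a)) (hg : Tendsto (fun x => g x / h x) l (𝓝 b))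
    (hba : b < a) (hh : ∀ᶠ x in l, 0 < h x) : ∀ᶠ x in l, g x < f x := by
  filter_upwards [hg.eventually_lt hf hba, hh] with x hx hpos
  exact (div_lt_div_iff_of_pos_right hpos).1 hx

theorem counterexample_boundary_asymptotics :
    Tendsto (fun x => uOne x / Real.sqrt (1 - x ^ 2))
      (nhdsWithin 1 (Set.Iio 1)) (nhds (2 / π)) ∧
    Tendsto (fun x => vOne x / Real.sqrt (1 - x ^ 2))
      (nhdsWithin 1 (Set.Iio 1)) (nhds ((π - 2) / π)) ∧
    (π - 2) / π < 2 / π ∧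
    ∃ ε : ℝ, 0 < ε ∧ ∀ x ∈ Set.Ioo (1 - ε) 1, vOne x < uOne x := by
  have hlt : (π - 2) / π < 2 / π :=
    (div_lt_div_iff_of_pos_right pi_pos).2 (by linarith [pi_lt_four])
  have hev : ∀ᶠ x in 𝓝[<] 1, vOne x < uOne x :=
    tendsto_uOne_div_sqrt.eventually_lt_of_div tendsto_vOne_div_sqrt hlt
      (eventually_mem_Ioo_zero_one_nhdsLT_one.mono fun _ => sqrt_one_sub_sq_pos)
  obtain ⟨l, hl, hIoo⟩ := (nhdsLT_basis (1 : ℝ)).eventually_iff.1 hev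
  refine ⟨tendsto_uOne_div_sqrt, tendsto_vOne_div_sqrt, hlt, 1 - l, sub_pos.2 hl, ?_⟩
  rwa [sub_sub_cancel]
end
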